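/- Let n ≥ 3 and let λ be a partition of n with a_k parts equal to k. Over the conjugacy class C_λ: the average number of cyclic double ascents and the average number of cyclic double descents both equal (n − a_1 − 2a_2)/6, and the average number of cyclic valleys and the average number of cyclic peaks both equal (n − a_1 + a_2)/3. -/

import Mathlib

/-!
Averaging a statistic over the conjugacy class of `ω₀` is the same as averaging it over all
conjugates `σ ω₀ σ⁻¹`, and relabelling by `σ` turns the local pattern `(ω⁻¹ i, i, ω i)` at
`i = σ j` into `(σ (ω₀⁻¹ j), σ j, σ (ω₀ j))`. As `σ` runs over `S_n` this is a uniformly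
distributed triple of distinct points when `j` lies on a cycle of length at least `3`, and a
uniformly distributed pair `(σ j, σ (ω₀ j))` of distinct points when `j` lies on a `2`-cycle;
fixed points contribute nothing. Each of the six relative orders of three distinct points has
frequency `1/6`: a double ascent or descent is one order, a valley or peak two. On a `2`-cycle
the smaller point is a valley and the larger one a peak. There are `n - a₁ - 2a₂` points on
long cycles and `2a₂` on `2`-cycles.
-/

/-- The conjugacy class of `S_n` consisting of permutations of cycle type `lam`
(Mathlib's `cycleType` omits fixed points, so we compare with the parts of `lam` not equal
to `1`). -/
noncomputable def conjClass (n : ℕ) (lam : n.Partition) : Finset (Equiv.Perm (Fin n)) :=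
  Finset.univ.filter fun ω => ω.cycleType = Multiset.filter (fun i => i ≠ 1) lam.parts

/-- The number of cyclic valleys: indices `i` with `ω⁻¹ i > i < ω i`. -/
def cv {n : ℕ} (ω : Equiv.Perm (Fin n)) : ℕ :=
  (Finset.univ.filter fun i : Fin n => i < ω⁻¹ i ∧ i < ω i).card

/-- The number of cyclic peaks: indices `i` with `ω⁻¹ i < i > ω i`. -/
def cpk {n : ℕ} (ω : Equiv.Perm (Fin n)) : ℕ :=
  (Finset.univ.filter fun i : Fin n => ω⁻¹ i < i ∧ ω i < i).card

/-- The number of cyclic double ascents: indices `i` with `ω⁻¹ i < i < ω i`. -/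
def cda {n : ℕ} (ω : Equiv.Perm (Fin n)) : ℕ :=
  (Finset.univ.filter fun i : Fin n => ω⁻¹ i < i ∧ i < ω i).card

/-- The number of cyclic double descents: indices `i` with `ω⁻¹ i > i > ω i`. -/
def cdd {n : ℕ} (ω : Equiv.Perm (Fin n)) : ℕ :=
  (Finset.univ.filter fun i : Fin n => i < ω⁻¹ i ∧ ω i < i).card

open Finset MulAction Equiv

section OrbitAverage

variable {G X M : Type*} [Group G] [Fintype G] [MulAction G X] [AddCommMonoid M]

theorem MulAction.sum_smul_eq_of_mem_orbit (f : X → M) {x y : X} (h : y ∈ orbit G x) :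
    ∑ g : G, f (g • y) = ∑ g : G, f (g • x) := by
  obtain ⟨h, rfl⟩ := h
  simpa [mul_smul] using Fintype.sum_equiv (Equiv.mulRight h) _ (fun g => f (g • x)) fun _ => rfl

theorem MulAction.card_smul_sum_smul_eq (f : X → M) (x : X) (s : Finset X)
    (hs : (s : Set X) = orbit G x) :
    #s • ∑ g : G, f (g • x) = Fintype.card G • ∑ y ∈ s, f y := by
  have hmem : ∀ y, y ∈ s ↔ y ∈ orbit G x := fun y => by rw [← hs, mem_coe]
  have hperm (g : G) : ∑ y ∈ s, f (g • y) = ∑ y ∈ s, f y :=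
    sum_nbij' (g • ·) (g⁻¹ • ·)
      (fun y hy => (hmem _).2 (mem_orbit_of_mem_orbit g ((hmem y).1 hy)))
      (fun y hy => (hmem _).2 (mem_orbit_of_mem_orbit g⁻¹ ((hmem y).1 hy)))
      (fun y _ => inv_smul_smul g y) (fun y _ => smul_inv_smul g y) fun _ _ => rfl
  calc #s • ∑ g : G, f (g • x) = ∑ y ∈ s, ∑ g : G, f (g • y) := by
        rw [← sum_const]
        exact sum_congr rfl fun y hy => (sum_smul_eq_of_mem_orbit f ((hmem y).1 hy)).symm
    _ = ∑ g : G, ∑ y ∈ s, f y := by rw [sum_comm]; exact sum_congr rfl fun g _ => hperm g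
    _ = Fintype.card G • ∑ y ∈ s, f y := by rw [sum_const, card_univ]

end OrbitAverage

section Patterns

variable {α : Type*} [Fintype α]

theorem card_embedding_fin (k : ℕ) :
    Fintype.card (Fin k ↪ α) = k.factorial * (Fintype.card α).choose k := by
  rw [Fintype.card_embedding_eq, Fintype.card_fin, Nat.descFactorial_eq_factorial_mul_choose]

variable (P : α → α → α → Prop) [∀ a b c, Decidable (P a b c)]

noncomputable def tripleFreq : ℝ :=
  #{e : Fin 3 ↪ α | P (e 0) (e 1) (e 2)} / Fintype.card (Fin 3 ↪ α)

/-- A point `j` on a `2`-cycle of `ω` has `ω⁻¹ j = ω j`, so it sees the pattern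
`P (ω j) j (ω j)`. -/
noncomputable def pairFreq : ℝ :=
  #{e : Fin 2 ↪ α | P (e 1) (e 0) (e 1)} / Fintype.card (Fin 2 ↪ α)

theorem tripleFreq_eq_of_card (hα : 3 ≤ Fintype.card α) {m : ℕ}
    (h : #{e : Fin 3 ↪ α | P (e 0) (e 1) (e 2)} = m * (Fintype.card α).choose 3) :
    tripleFreq P = m / 6 := by
  have : ((Fintype.card α).choose 3 : ℝ) ≠ 0 := by
    have := Nat.choose_pos hα
    positivity
  rw [tripleFreq, h, card_embedding_fin]
  push_cast [Nat.factorial]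
  field_simp

theorem pairFreq_eq_of_card (hα : 2 ≤ Fintype.card α) {m : ℕ}
    (h : #{e : Fin 2 ↪ α | P (e 1) (e 0) (e 1)} = m * (Fintype.card α).choose 2) :
    pairFreq P = m / 2 := by
  have : ((Fintype.card α).choose 2 : ℝ) ≠ 0 := by
    have := Nat.choose_pos hα
    positivity
  rw [pairFreq, h, card_embedding_fin]
  push_cast [Nat.factorial]
  field_simp

variable [DecidableEq α]

theorem Equiv.Perm.card_filter_smul_embedding {ι : Type*} [Fintype ι] (e : ι ↪ α)
    (Q : (ι ↪ α) → Prop) [DecidablePred Q] :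
    (#{σ : Perm α | Q (σ • e)} : ℝ)
      = Fintype.card (Perm α) * (#{e' | Q e'} / Fintype.card (ι ↪ α)) := by
  have horbit : ((univ : Finset (ι ↪ α)) : Set (ι ↪ α)) = orbit (Perm α) e := by
    ext e'
    simpa [mem_orbit_iff] using exists_smul_eq_embedding e e'
  have h := card_smul_sum_smul_eq (fun e' => if Q e' then (1 : ℝ) else 0) e univ horbit
  have hpos : (Fintype.card (ι ↪ α) : ℝ) ≠ 0 := by
    have : 0 < Fintype.card (ι ↪ α) := Fintype.card_pos_iff.2 ⟨e⟩
    positivity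
  simp only [sum_boole, nsmul_eq_mul, card_univ] at h
  field_simp
  linarith

theorem card_filter_pattern_at (hP : ∀ a, ¬ P a a a) (ω : Perm α) (j : α) :
    (#{σ : Perm α | P (σ (ω⁻¹ j)) (σ j) (σ (ω j))} : ℝ)
      = Fintype.card (Perm α) * ((if ω j ≠ j ∧ ω (ω j) ≠ j then tripleFreq P else 0)
          + (if ω j ≠ j ∧ ω (ω j) = j then pairFreq P else 0)) := by
  by_cases h1 : ω j = j
  · have hinv : ω⁻¹ j = j := Perm.inv_eq_iff_eq.2 h1.symm
    simp [h1, hinv, hP]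
  by_cases h2 : ω (ω j) = j
  · have hinv : ω⁻¹ j = ω j := Perm.inv_eq_iff_eq.2 h2.symm
    let e : Fin 2 ↪ α := ⟨![j, ω j], injective_pair_iff_ne.2 (Ne.symm h1)⟩
    rw [if_neg (by simp [h2]), if_pos ⟨h1, h2⟩, zero_add, hinv]
    exact Perm.card_filter_smul_embedding e fun e' => P (e' 1) (e' 0) (e' 1)
  · have h3 : ω.symm j ≠ j := by rwa [Ne, symm_apply_eq, eq_comm]
    have h4 : ω.symm j ≠ ω j := by rwa [Ne, symm_apply_eq, eq_comm]
    let e : Fin 3 ↪ α := ⟨![ω⁻¹ j, j, ω j], by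
      intro a b
      fin_cases a <;> fin_cases b <;> simp [h1, h3, h4, Ne.symm h1, Ne.symm h3, Ne.symm h4]⟩
    rw [if_pos ⟨h1, h2⟩, if_neg (by simp [h2]), add_zero]
    exact Perm.card_filter_smul_embedding e fun e' => P (e' 0) (e' 1) (e' 2)

theorem sum_card_pattern_conj (hP : ∀ a, ¬ P a a a) (ω : Perm α) :
    ∑ σ : Perm α, (#{i | P ((σ * ω * σ⁻¹)⁻¹ i) i ((σ * ω * σ⁻¹) i)} : ℝ)
      = Fintype.card (Perm α) * (#{j | ω j ≠ j ∧ ω (ω j) ≠ j} * tripleFreq P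
          + #{j | ω j ≠ j ∧ ω (ω j) = j} * pairFreq P) := by
  have hrelabel (σ : Perm α) : #{i | P ((σ * ω * σ⁻¹)⁻¹ i) i ((σ * ω * σ⁻¹) i)}
      = #{j | P (σ (ω⁻¹ j)) (σ j) (σ (ω j))} := by
    rw [card_filter, card_filter, ← Equiv.sum_comp σ]
    simp
  have hswap : ∑ σ : Perm α, #{j | P (σ (ω⁻¹ j)) (σ j) (σ (ω j))}
      = ∑ j, #{σ : Perm α | P (σ (ω⁻¹ j)) (σ j) (σ (ω j))} := by
    simp only [card_filter]
    exact sum_comm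
  calc ∑ σ : Perm α, (#{i | P ((σ * ω * σ⁻¹)⁻¹ i) i ((σ * ω * σ⁻¹) i)} : ℝ)
      = ∑ j, (#{σ : Perm α | P (σ (ω⁻¹ j)) (σ j) (σ (ω j))} : ℝ) := by
        simp_rw [hrelabel]; exact_mod_cast hswap
    _ = _ := by
        simp_rw [card_filter_pattern_at P hP, ← mul_sum, sum_add_distrib, ← sum_filter,
          sum_const, nsmul_eq_mul]

theorem sum_card_pattern_div_card_of_isConj (hP : ∀ a, ¬ P a a a) {C : Finset (Perm α)}
    {ω₀ : Perm α} (hC : ∀ ω, ω ∈ C ↔ IsConj ω ω₀) :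
    (∑ ω ∈ C, (#{i | P (ω⁻¹ i) i (ω i)} : ℝ)) / #C
      = #{j | ω₀ j ≠ j ∧ ω₀ (ω₀ j) ≠ j} * tripleFreq P
          + #{j | ω₀ j ≠ j ∧ ω₀ (ω₀ j) = j} * pairFreq P := by
  have horbit : (C : Set (Perm α)) = orbit (ConjAct (Perm α)) ω₀ := by
    ext ω
    rw [mem_coe, hC, ConjAct.mem_orbit_conjAct]
  have h := card_smul_sum_smul_eq (fun ω : Perm α => (#{i | P (ω⁻¹ i) i (ω i)} : ℝ)) ω₀ C horbit
  have hsum : ∑ g : ConjAct (Perm α), (#{i | P ((g • ω₀)⁻¹ i) i ((g • ω₀) i)} : ℝ)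
      = ∑ σ : Perm α, (#{i | P ((σ * ω₀ * σ⁻¹)⁻¹ i) i ((σ * ω₀ * σ⁻¹) i)} : ℝ) :=
    Fintype.sum_equiv ConjAct.ofConjAct.toEquiv _ _ fun g => by rw [ConjAct.smul_def]; rfl
  have hC0 : (#C : ℝ) ≠ 0 := by
    have : 0 < #C := card_pos.2 ⟨ω₀, (hC ω₀).2 (IsConj.refl ω₀)⟩
    positivity
  rw [hsum, sum_card_pattern_conj P hP, ConjAct.card, nsmul_eq_mul, nsmul_eq_mul] at h
  rw [div_eq_iff hC0]
  refine mul_left_cancel₀ (Nat.cast_ne_zero.2 (Fintype.card_ne_zero (α := Perm α))) ?_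
  linear_combination -h

end Patterns

section LinearOrder

variable {α : Type*} [Fintype α] [LinearOrder α]

theorem card_filter_strictMono_embedding (k : ℕ) :
    #{e : Fin k ↪ α | StrictMono e} = (Fintype.card α).choose k := by
  rw [← card_univ, ← card_powersetCard]
  refine card_bij (fun e _ => univ.map e) (fun e _ => by simp [mem_powersetCard])
    (fun e₁ h₁ e₂ h₂ h => ?_) (fun s hs => ?_)
  · have hcard : #(univ.map e₁) = k := by simp
    have hmono₁ := (mem_filter.1 h₁).2
    have hmono₂ := (mem_filter.1 h₂).2
    refine DFunLike.coe_injective ((orderEmbOfFin_unique hcard (by simp) hmono₁).trans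
      (orderEmbOfFin_unique hcard (fun x => ?_) hmono₂).symm)
    rw [h]; simp
  · have hs' := (mem_powersetCard.1 hs).2
    exact ⟨(s.orderEmbOfFin hs').toEmbedding, by simpa using (s.orderEmbOfFin hs').strictMono,
      map_orderEmbOfFin_univ s hs'⟩

theorem card_filter_strictMono_comp (k : ℕ) (π : Perm (Fin k)) :
    #{e : Fin k ↪ α | StrictMono (e ∘ π)} = (Fintype.card α).choose k := by
  rw [← card_filter_strictMono_embedding k]
  exact card_equiv (Equiv.embeddingCongr π.symm (Equiv.refl α)) fun e => by simp

theorem tripleFreq_lt_lt (hα : 3 ≤ Fintype.card α) :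
    tripleFreq (fun a b c : α => a < b ∧ b < c) = 1 / 6 := by
  rw [tripleFreq_eq_of_card _ hα (m := 1), Nat.cast_one]
  rw [one_mul, ← card_filter_strictMono_comp 3 1]
  congr 1
  ext e
  simp [Fin.strictMono_iff_lt_succ, Fin.forall_fin_two]

theorem tripleFreq_gt_gt (hα : 3 ≤ Fintype.card α) :
    tripleFreq (fun a b c : α => b < a ∧ c < b) = 1 / 6 := by
  rw [tripleFreq_eq_of_card _ hα (m := 1), Nat.cast_one]
  rw [one_mul, ← card_filter_strictMono_comp 3 (swap 0 2)]
  congr 1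
  ext e
  simp [Fin.strictMono_iff_lt_succ, Fin.forall_fin_two, swap_apply_of_ne_of_ne, and_comm]

theorem card_filter_strictMono_comp_or (k : ℕ) {π₁ π₂ : Perm (Fin k)} (hπ : π₁ ≠ π₂) :
    #{e : Fin k ↪ α | StrictMono (e ∘ π₁) ∨ StrictMono (e ∘ π₂)}
      = 2 * (Fintype.card α).choose k := by
  rw [filter_or, card_union_of_disjoint, card_filter_strictMono_comp, card_filter_strictMono_comp,
    two_mul]
  refine disjoint_filter.2 fun e _ h₁ h₂ => hπ ?_
  have h := (h₁.range_inj h₂).1 (by simp [Set.range_comp])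
  ext i
  exact congrArg Fin.val (e.injective (congrFun h i))

theorem tripleFreq_gt_lt (hα : 3 ≤ Fintype.card α) :
    tripleFreq (fun a b c : α => b < a ∧ b < c) = 1 / 3 := by
  rw [tripleFreq_eq_of_card _ hα (m := 2)]
  · norm_num
  rw [← card_filter_strictMono_comp_or 3 (π₁ := swap 0 1) (π₂ := swap 0 1 * swap 1 2) (by decide)]
  congr 1
  ext e
  have h02 : e 0 ≠ e 2 := e.injective.ne (by decide)
  simp only [mem_filter, mem_univ, true_and, Fin.strictMono_iff_lt_succ, Fin.forall_fin_two,
    Function.comp_apply, Perm.coe_mul]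
  grind

theorem tripleFreq_lt_gt (hα : 3 ≤ Fintype.card α) :
    tripleFreq (fun a b c : α => a < b ∧ c < b) = 1 / 3 := by
  rw [tripleFreq_eq_of_card _ hα (m := 2)]
  · norm_num
  rw [← card_filter_strictMono_comp_or 3 (π₁ := swap 1 2) (π₂ := swap 1 2 * swap 0 1) (by decide)]
  congr 1
  ext e
  have h02 : e 0 ≠ e 2 := e.injective.ne (by decide)
  simp only [mem_filter, mem_univ, true_and, Fin.strictMono_iff_lt_succ, Fin.forall_fin_two,
    Function.comp_apply, Perm.coe_mul]
  grind

theorem pairFreq_lt_lt : pairFreq (fun a b c : α => a < b ∧ b < c) = 0 := by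
  rw [pairFreq, filter_false_of_mem fun e _ h => lt_asymm h.1 h.2, card_empty, Nat.cast_zero,
    zero_div]

theorem pairFreq_gt_gt : pairFreq (fun a b c : α => b < a ∧ c < b) = 0 := by
  rw [pairFreq, filter_false_of_mem fun e _ h => lt_asymm h.1 h.2, card_empty, Nat.cast_zero,
    zero_div]

theorem pairFreq_gt_lt (hα : 2 ≤ Fintype.card α) :
    pairFreq (fun a b c : α => b < a ∧ b < c) = 1 / 2 := by
  rw [pairFreq_eq_of_card _ hα (m := 1), Nat.cast_one]
  rw [one_mul, ← card_filter_strictMono_comp 2 1]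
  congr 1
  ext e
  simp [Fin.strictMono_iff_lt_succ]

theorem pairFreq_lt_gt (hα : 2 ≤ Fintype.card α) :
    pairFreq (fun a b c : α => a < b ∧ c < b) = 1 / 2 := by
  rw [pairFreq_eq_of_card _ hα (m := 1), Nat.cast_one]
  rw [one_mul, ← card_filter_strictMono_comp 2 (swap 0 1)]
  congr 1
  ext e
  simp [Fin.strictMono_iff_lt_succ]

end LinearOrder

namespace Equiv.Perm

variable {α : Type*} [Fintype α] [DecidableEq α]

theorem card_support_cycleOf_eq_two_iff (ω : Perm α) (j : α) :
    #(ω.cycleOf j).support = 2 ↔ ω j ≠ j ∧ ω (ω j) = j := by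
  by_cases h1 : ω j = j
  · simp [h1, (cycleOf_eq_one_iff ω).2 h1]
  have hc := isCycle_cycleOf ω h1
  have hcj : ω.cycleOf j j ≠ j := by rwa [cycleOf_apply_self]
  have hsq : ω (ω j) = (ω.cycleOf j ^ 2) j := by rw [cycleOf_pow_apply_self, sq, mul_apply]
  rw [hsq, ← hc.pow_eq_one_iff' hcj, ← orderOf_dvd_iff_pow_eq_one, hc.orderOf]
  have := hc.two_le_card_support
  constructor
  · intro h; exact ⟨h1, by rw [h]⟩
  · rintro ⟨-, h⟩; exact le_antisymm (Nat.le_of_dvd two_pos h) this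

theorem card_filter_card_support_cycleOf_eq (ω : Perm α) {k : ℕ} (hk : k ≠ 0) :
    #{x | #(ω.cycleOf x).support = k} = k * ω.cycleType.count k := by
  have hmaps : ∀ x ∈ ({x | #(ω.cycleOf x).support = k} : Finset α),
      ω.cycleOf x ∈ ω.cycleFactorsFinset.filter (#·.support = k) := by
    intro x hx
    simp only [mem_filter, mem_univ, true_and] at hx ⊢
    refine ⟨cycleOf_mem_cycleFactorsFinset_iff.2 (mem_support.2 fun h => hk ?_), hx⟩
    rw [← hx, (cycleOf_eq_one_iff ω).2 h, support_one, card_empty]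
  have hfiber : ∀ c ∈ ω.cycleFactorsFinset.filter (#·.support = k),
      #{x ∈ ({x | #(ω.cycleOf x).support = k} : Finset α) | ω.cycleOf x = c} = k := by
    intro c hc
    obtain ⟨hcf, hck⟩ := mem_filter.1 hc
    have hsupp : {x ∈ ({x | #(ω.cycleOf x).support = k} : Finset α) | ω.cycleOf x = c}
        = c.support := by
      ext x
      rw [mem_filter, mem_filter, ← eq_cycleOf_of_mem_cycleFactorsFinset_iff ω c hcf x]
      constructor
      · exact fun h => h.2.symm
      · intro h
        exact ⟨⟨mem_univ x, h ▸ hck⟩, h.symm⟩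
    rw [hsupp, hck]
  rw [card_eq_sum_card_fiberwise hmaps, sum_congr rfl hfiber, sum_const, smul_eq_mul, mul_comm,
    cycleType_def, Multiset.count_map]
  simp only [card_def, filter_val, Function.comp_apply, eq_comm]
  congr

theorem card_filter_two_cycle_points (ω : Perm α) :
    #{j | ω j ≠ j ∧ ω (ω j) = j} = 2 * ω.cycleType.count 2 := by
  rw [← card_filter_card_support_cycleOf_eq ω two_ne_zero]
  simp_rw [card_support_cycleOf_eq_two_iff]

theorem card_filter_long_cycle_points_add (ω : Perm α) :
    #{j | ω j ≠ j ∧ ω (ω j) ≠ j} + 2 * ω.cycleType.count 2 = ω.cycleType.sum := by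
  have h := card_filter_add_card_filter_not (s := ω.support) (fun j => ω (ω j) ≠ j)
  simp only [support, filter_filter, not_not] at h
  rw [← card_filter_two_cycle_points, sum_cycleType, support, h]

end Equiv.Perm

theorem Nat.Partition.sum_filter_ne_one_add_count_one {n : ℕ} (lam : n.Partition) :
    (lam.parts.filter (· ≠ 1)).sum + lam.parts.count 1 = n := by
  have h := Multiset.sum_filter_add_sum_filter_not (s := lam.parts) (· ≠ 1)
  simp only [not_not, Multiset.filter_eq', Multiset.sum_replicate, smul_eq_mul, mul_one] at h
  rw [h, lam.parts_sum]

section ConjClass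

variable {n : ℕ} {lam : n.Partition}

theorem mem_conjClass_iff_isConj {ω ω₀ : Perm (Fin n)} (h₀ : ω₀ ∈ conjClass n lam) :
    ω ∈ conjClass n lam ↔ IsConj ω ω₀ := by
  simp only [conjClass, mem_filter, mem_univ, true_and] at h₀ ⊢
  rw [Perm.isConj_iff_cycleType_eq, h₀]

theorem conjClass_nonempty (lam : n.Partition) : (conjClass n lam).Nonempty := by
  have hsum : (lam.parts.filter (· ≠ 1)).sum ≤ Fintype.card (Fin n) := by
    have := lam.sum_filter_ne_one_add_count_one
    rw [Fintype.card_fin]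
    omega
  have htwo : ∀ a ∈ lam.parts.filter (· ≠ 1), 2 ≤ a := fun a ha => by
    obtain ⟨hmem, hne⟩ := Multiset.mem_filter.1 ha
    have := lam.parts_pos hmem
    omega
  obtain ⟨ω, hω⟩ := (Perm.exists_with_cycleType_iff (Fin n)).2 ⟨hsum, htwo⟩
  exact ⟨ω, by simp [conjClass, hω]⟩

theorem card_filter_two_cycle_points_of_mem_conjClass {ω : Perm (Fin n)}
    (h : ω ∈ conjClass n lam) : #{j | ω j ≠ j ∧ ω (ω j) = j} = 2 * lam.parts.count 2 := by
  rw [Perm.card_filter_two_cycle_points, (mem_filter.1 h).2,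
    Multiset.count_filter_of_pos (by decide)]

theorem card_filter_long_cycle_points_of_mem_conjClass {ω : Perm (Fin n)}
    (h : ω ∈ conjClass n lam) :
    #{j | ω j ≠ j ∧ ω (ω j) ≠ j} + 2 * lam.parts.count 2 + lam.parts.count 1 = n := by
  have hlong := Perm.card_filter_long_cycle_points_add ω
  rw [(mem_filter.1 h).2, Multiset.count_filter_of_pos (by decide)] at hlong
  rw [hlong, lam.sum_filter_ne_one_add_count_one]

end ConjClass

theorem stmt11 (n : ℕ) (hn : 3 ≤ n) (lam : n.Partition) (a1 a2 : ℕ)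
    (ha1 : a1 = Multiset.count 1 lam.parts) (ha2 : a2 = Multiset.count 2 lam.parts) :
    (∑ ω ∈ conjClass n lam, (cda ω : ℝ)) / ((conjClass n lam).card : ℝ)
      = ((n : ℝ) - (a1 : ℝ) - 2 * (a2 : ℝ)) / 6 ∧
    (∑ ω ∈ conjClass n lam, (cdd ω : ℝ)) / ((conjClass n lam).card : ℝ)
      = ((n : ℝ) - (a1 : ℝ) - 2 * (a2 : ℝ)) / 6 ∧
    (∑ ω ∈ conjClass n lam, (cv ω : ℝ)) / ((conjClass n lam).card : ℝ)
      = ((n : ℝ) - (a1 : ℝ) + (a2 : ℝ)) / 3 ∧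
    (∑ ω ∈ conjClass n lam, (cpk ω : ℝ)) / ((conjClass n lam).card : ℝ)
      = ((n : ℝ) - (a1 : ℝ) + (a2 : ℝ)) / 3 := by
  obtain ⟨ω₀, hω₀⟩ := conjClass_nonempty lam
  have hC (ω : Perm (Fin n)) := mem_conjClass_iff_isConj (ω := ω) hω₀
  have hcard : 3 ≤ Fintype.card (Fin n) := by rwa [Fintype.card_fin]
  have hm₂ : (#{j | ω₀ j ≠ j ∧ ω₀ (ω₀ j) = j} : ℝ) = 2 * a2 := by
    rw [card_filter_two_cycle_points_of_mem_conjClass hω₀, ha2]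
    push_cast
    ring
  have hm₃ : (#{j | ω₀ j ≠ j ∧ ω₀ (ω₀ j) ≠ j} : ℝ) = n - a1 - 2 * a2 := by
    have h := congrArg (Nat.cast (R := ℝ)) (card_filter_long_cycle_points_of_mem_conjClass hω₀)
    push_cast at h
    rw [ha1, ha2]
    linarith
  refine ⟨?_, ?_, ?_, ?_⟩
  · refine (sum_card_pattern_div_card_of_isConj (fun a b c => a < b ∧ b < c)
      (fun a h => lt_irrefl a h.1) hC).trans ?_
    rw [hm₂, hm₃, tripleFreq_lt_lt hcard, pairFreq_lt_lt]
    ring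
  · refine (sum_card_pattern_div_card_of_isConj (fun a b c => b < a ∧ c < b)
      (fun a h => lt_irrefl a h.1) hC).trans ?_
    rw [hm₂, hm₃, tripleFreq_gt_gt hcard, pairFreq_gt_gt]
    ring
  · refine (sum_card_pattern_div_card_of_isConj (fun a b c => b < a ∧ b < c)
      (fun a h => lt_irrefl a h.1) hC).trans ?_
    rw [hm₂, hm₃, tripleFreq_gt_lt hcard, pairFreq_gt_lt (by omega)]
    ring
  · refine (sum_card_pattern_div_card_of_isConj (fun a b c => a < b ∧ c < b)
      (fun a h => lt_irrefl a h.1) hC).trans ?_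
    rw [hm₂, hm₃, tripleFreq_lt_gt hcard, pairFreq_lt_gt (by omega)]
    ring
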